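/- The Fourier transform of the function s ↦ (πs/σ)/sinh(πs/σ) (σ > 0) is, up to normalization, related to the derivative of the Fermi-Dirac function: explicitly, ∫_ℝ e^{-isx} f'_σ(x) dx = −(πs/σ)/sinh(πs/σ), where f_σ(x) = (1 + e^{σx})⁻¹. -/

import Mathlib

open MeasureTheory Set Complex

lemma fermi_hasDerivAt (σ : ℝ) (x : ℝ) :
    HasDerivAt (fun y : ℝ => ((1 : ℂ) + (Real.exp (σ * y) : ℂ))⁻¹)
      (-((σ : ℂ) * (Real.exp (σ * x) : ℂ)) / ((1 : ℂ) + (Real.exp (σ * x) : ℂ)) ^ 2) x := by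
  have h1 : HasDerivAt (fun y : ℝ => (1 + Real.exp (σ * y))⁻¹)
      (-(σ * Real.exp (σ * x)) / (1 + Real.exp (σ * x)) ^ 2) x := by
    have h0 : HasDerivAt (fun y : ℝ => 1 + Real.exp (σ * y)) (σ * Real.exp (σ * x)) x := by
      have := (Real.hasDerivAt_exp (σ * x)).comp x ((hasDerivAt_id x).const_mul σ)
      simpa [mul_comm] using this.const_add 1
    have hne : (1 + Real.exp (σ * x)) ≠ 0 := by positivity
    exact h0.inv hne
  have h2 := HasDerivAt.ofReal_comp h1
  simpa [Complex.ofReal_inv, Complex.ofReal_add, Complex.ofReal_one, Complex.ofReal_mul,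
    Complex.ofReal_neg, Complex.ofReal_div, Complex.ofReal_pow] using h2

lemma beta_Ioi (z : ℂ) :
    ∫ t : ℝ in Ioi 0, (t : ℂ) ^ (-z) / (1 + (t : ℂ)) ^ 2
      = Complex.betaIntegral (1 - z) (1 + z) := by
  set g : ℝ → ℂ := fun t => (t : ℂ) ^ (-z) / (1 + (t : ℂ)) ^ 2 with hg
  have himg : (fun x : ℝ => x / (1 - x)) '' Ioo 0 1 = Ioi 0 := by
    ext t
    constructor
    · rintro ⟨x, ⟨hx0, hx1⟩, rfl⟩
      have : 0 < 1 - x := by linarith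
      exact div_pos hx0 this
    · intro ht
      have ht' : (0:ℝ) < t := ht
      have h1t : (0:ℝ) < 1 + t := by linarith
      refine ⟨t / (1 + t), ⟨by positivity, by rw [div_lt_one h1t]; linarith⟩, ?_⟩
      field_simp
      ring
  have hderiv : ∀ x ∈ Ioo (0:ℝ) 1,
      HasDerivWithinAt (fun x : ℝ => x / (1 - x)) (((1 - x) ^ 2)⁻¹) (Ioo 0 1) x := by
    intro x hx
    have hbx : (1 : ℝ) - x ≠ 0 := by have := hx.2; intro h; nlinarith
    have h1 : HasDerivAt (fun x : ℝ => x / (1 - x))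
        (1 * (1 - x)⁻¹ + x * (-(-1) / (1 - x) ^ 2)) x := by
      have hi : HasDerivAt (fun x : ℝ => (1 - x)⁻¹) (-(-1) / (1 - x) ^ 2) x :=
        (((hasDerivAt_id x).const_sub 1).inv hbx)
      simpa only [div_eq_mul_inv, Pi.mul_def] using (hasDerivAt_id' x).mul hi
    have : (1 : ℝ) * (1 - x)⁻¹ + x * (-(-1) / (1 - x) ^ 2) = ((1 - x) ^ 2)⁻¹ := by
      field_simp
      ring
    rw [this] at h1
    exact h1.hasDerivWithinAt
  have hinj : InjOn (fun x : ℝ => x / (1 - x)) (Ioo 0 1) := by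
    intro a ha b hb h
    have ha' : (1:ℝ) - a ≠ 0 := by have := ha.2; intro hc; nlinarith
    have hb' : (1:ℝ) - b ≠ 0 := by have := hb.2; intro hc; nlinarith
    field_simp at h
    nlinarith [h]
  rw [← himg, integral_image_eq_integral_abs_deriv_smul measurableSet_Ioo hderiv hinj g]
  rw [Complex.betaIntegral, intervalIntegral.integral_of_le zero_le_one,
    integral_Ioc_eq_integral_Ioo]
  refine setIntegral_congr_fun measurableSet_Ioo fun x hx => ?_
  obtain ⟨hx0, hx1⟩ := hx
  have hb : (0:ℝ) < 1 - x := by linarith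
  have hbne : ((1 - x : ℝ) : ℂ) ≠ 0 := by
    simp only [ne_eq, ofReal_eq_zero]; linarith
  have e1 : (1 : ℂ) + ((x / (1 - x) : ℝ) : ℂ) = (((1 - x)⁻¹ : ℝ) : ℂ) := by
    rw [← ofReal_one, ← ofReal_add]
    congr 1
    field_simp
    ring
  have e2 : (((x / (1 - x) : ℝ)) : ℂ) ^ (-z)
      = ((x : ℝ) : ℂ) ^ (-z) * (((1 - x : ℝ)) : ℂ) ^ z := by
    have : ((x / (1 - x) : ℝ) : ℂ) = ((x : ℝ) : ℂ) * (((1 - x)⁻¹ : ℝ) : ℂ) := by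
      push_cast; ring
    rw [this, mul_cpow_ofReal_nonneg hx0.le (by positivity)]
    congr 1
    rw [ofReal_inv, Complex.inv_cpow _ _ ?harg, ← Complex.cpow_neg, neg_neg]
    case harg =>
      rw [Complex.arg_ofReal_of_nonneg hb.le]
      exact Real.pi_ne_zero.symm
  have habs : |((1 - x : ℝ) ^ 2)⁻¹| = ((1 - x : ℝ) ^ 2)⁻¹ := abs_of_pos (by positivity)
  rw [hg]
  simp only [habs, real_smul, e1, e2]
  have h1 : (1 : ℂ) - z - 1 = -z := by ring
  have h2 : (1 : ℂ) + z - 1 = z := by ring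
  rw [h1, h2]
  have hbne' : (1 : ℂ) - (x : ℂ) ≠ 0 := by
    intro h; apply hbne; push_cast; rw [← h]
  push_cast
  rw [div_eq_mul_inv, inv_pow, inv_inv]
  field_simp

/-- The Fourier transform of the derivative of the Fermi-Dirac function
`f_σ(x) = (1+e^{σx})⁻¹` is `∫ e^{-isx} f'_σ(x) dx = -(πs/σ)/sinh(πs/σ)`. -/
theorem fourier_deriv_fermiDirac (σ s : ℝ) (hσ : 0 < σ) (hs : s ≠ 0) :
    ∫ x : ℝ, Complex.exp (-Complex.I * s * x) *
        (deriv (fun y : ℝ => (1 + Real.exp (σ * y))⁻¹) x : ℂ)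
      = -((Real.pi * s / σ) / Real.sinh (Real.pi * s / σ) : ℝ) := by
  set c : ℝ := s / σ with hc
  have hcne : c ≠ 0 := div_ne_zero hs hσ.ne'
  set z : ℂ := Complex.I * (c : ℂ) with hz
  have hzne : z ≠ 0 := by
    simp [hz, Complex.I_ne_zero, hcne]
  set g : ℝ → ℂ := fun t => (t : ℂ) ^ (-z) / (1 + (t : ℂ)) ^ 2 with hg
  -- step 1: main integral = - ∫ g over Ioi 0
  have himg2 : (fun x : ℝ => Real.exp (σ * x)) '' univ = Ioi 0 := by
    ext t
    simp only [image_univ, mem_range, mem_Ioi]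
    constructor
    · rintro ⟨x, rfl⟩; exact Real.exp_pos _
    · intro ht
      exact ⟨Real.log t / σ, by rw [mul_div_cancel₀ _ hσ.ne', Real.exp_log ht]⟩
  have hderiv2 : ∀ x ∈ (univ : Set ℝ),
      HasDerivWithinAt (fun x : ℝ => Real.exp (σ * x)) (σ * Real.exp (σ * x)) univ x := by
    intro x _
    have := (Real.hasDerivAt_exp (σ * x)).comp x ((hasDerivAt_id x).const_mul σ)
    exact (by simpa [mul_comm, Function.comp_def] using this : HasDerivAt _ _ x).hasDerivWithinAt
  have hinj2 : InjOn (fun x : ℝ => Real.exp (σ * x)) univ := by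
    intro a _ b _ h
    exact mul_left_cancel₀ hσ.ne' (Real.exp_injective h)
  have key : ∫ t : ℝ in Ioi 0, g t
      = ∫ x : ℝ, |σ * Real.exp (σ * x)| • g (Real.exp (σ * x)) := by
    rw [← himg2, integral_image_eq_integral_abs_deriv_smul MeasurableSet.univ hderiv2 hinj2 g,
      setIntegral_univ]
  have hpt : ∀ x : ℝ,
      Complex.exp (-Complex.I * s * x) *
        (deriv (fun y : ℝ => (1 + Real.exp (σ * y))⁻¹) x : ℂ)
      = -(|σ * Real.exp (σ * x)| • g (Real.exp (σ * x))) := by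
    intro x
    rw [show deriv (fun y : ℝ => ((1 : ℂ) + (Real.exp (σ * y) : ℂ))⁻¹) x
        = -((σ : ℂ) * (Real.exp (σ * x) : ℂ)) / ((1 : ℂ) + (Real.exp (σ * x) : ℂ)) ^ 2 from
      (fermi_hasDerivAt σ x).deriv]
    have hE : (0:ℝ) < Real.exp (σ * x) := Real.exp_pos _
    have habs : |σ * Real.exp (σ * x)| = σ * Real.exp (σ * x) := abs_of_pos (by positivity)
    have hcpow : ((Real.exp (σ * x) : ℝ) : ℂ) ^ (-z) = Complex.exp (-Complex.I * s * x) := by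
      rw [Complex.ofReal_exp, Complex.cpow_def_of_ne_zero (Complex.exp_ne_zero _),
        Complex.log_exp (by simp [Real.pi_pos] : -Real.pi < ((σ * x : ℝ) : ℂ).im)
          (by simp [Real.pi_pos.le] : ((σ * x : ℝ) : ℂ).im ≤ Real.pi)]
      congr 1
      rw [hz, hc]
      have hσc : (σ : ℂ) ≠ 0 := by exact_mod_cast hσ.ne'
      push_cast
      field_simp
    rw [hg, habs, real_smul, ← hcpow]
    have hden : ((1 : ℝ) + Real.exp (σ * x)) ≠ 0 := by positivity
    have hdenc : ((1 : ℂ) + (Real.exp (σ * x) : ℂ)) ≠ 0 := by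
      rw [show ((1:ℂ) + (Real.exp (σ * x) : ℂ)) = ((1 + Real.exp (σ * x) : ℝ) : ℂ) by push_cast; ring]
      exact_mod_cast hden
    push_cast
    field_simp
  rw [show (∫ x : ℝ, Complex.exp (-Complex.I * s * x) *
        (deriv (fun y : ℝ => (1 + Real.exp (σ * y))⁻¹) x : ℂ))
      = ∫ x : ℝ, -(|σ * Real.exp (σ * x)| • g (Real.exp (σ * x))) from
    integral_congr_ae (Filter.Eventually.of_forall hpt), integral_neg, ← key, hg, beta_Ioi]
  -- step 2: evaluate the beta integral
  have hre1 : 0 < (1 - z).re := by simp [hz]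
  have hre2 : 0 < (1 + z).re := by simp [hz]
  have hB : Complex.Gamma (1 - z) * Complex.Gamma (1 + z)
      = Complex.betaIntegral (1 - z) (1 + z) := by
    have := Complex.Gamma_mul_Gamma_eq_betaIntegral hre1 hre2
    rw [show (1 : ℂ) - z + (1 + z) = 2 by ring] at this
    rw [this, show (2 : ℂ) = 1 + 1 by norm_num, Complex.Gamma_add_one _ one_ne_zero,
      Complex.Gamma_one]
    ring
  rw [← hB, show (1 : ℂ) + z = z + 1 by ring, Complex.Gamma_add_one _ hzne]
  rw [show Complex.Gamma (1 - z) * (z * Complex.Gamma z)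
      = z * (Complex.Gamma z * Complex.Gamma (1 - z)) by ring,
    Complex.Gamma_mul_Gamma_one_sub]
  have hsin : Complex.sin (↑Real.pi * z) = (Real.sinh (Real.pi * c) : ℂ) * Complex.I := by
    rw [hz, show (↑Real.pi : ℂ) * (Complex.I * (c : ℂ)) = ((Real.pi * c : ℝ) : ℂ) * Complex.I by
      push_cast; ring, Complex.sin_mul_I, Complex.ofReal_sinh]
  rw [hsin]
  have hsinh : Real.sinh (Real.pi * c) ≠ 0 := by
    rw [Real.sinh_ne_zero]
    exact mul_ne_zero Real.pi_ne_zero hcne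
  have hpc : Real.pi * s / σ = Real.pi * c := by rw [hc]; ring
  rw [hpc]
  have hsc : ((Real.sinh (Real.pi * c) : ℝ) : ℂ) ≠ 0 := by exact_mod_cast hsinh
  have hSI : ((Real.sinh (Real.pi * c) : ℝ) : ℂ) * Complex.I ≠ 0 :=
    mul_ne_zero hsc Complex.I_ne_zero
  have hsc3 : Complex.sinh ((↑Real.pi : ℂ) * (↑c : ℂ)) ≠ 0 := by
    rw [show ((↑Real.pi : ℂ) * (↑c : ℂ)) = ((Real.pi * c : ℝ) : ℂ) by push_cast; ring,
      ← Complex.ofReal_sinh]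
    exact_mod_cast hsinh
  rw [neg_inj, ← mul_div_assoc, div_eq_iff hSI, hz]
  push_cast
  conv_rhs => rw [mul_comm (Complex.sinh ((Real.pi : ℂ) * (c : ℂ))) Complex.I, ← mul_assoc,
    mul_right_comm, div_mul_cancel₀ _ hsc3]
  ring
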